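/- Row 3 of the learned predicate π° is sound: let W be a path in G(m,n) whose last vertex is not a corner of the square s(i,j) (i < m, j < n), and suppose cnt(W, s(i,j)) = 2. Then every path W' having W as a prefix satisfies cnt(W', s(i,j)) = 2; that is, no extension of W to a longer path can include any further edge of S(i,j). -/

import Mathlib

open SimpleGraph

/-- The grid graph on `(m+1) × (n+1)` vertices: two vertices are adjacent iff
the sum of the absolute differences of their coordinates (in `ℤ`) equals `1`. -/
def gridGraph (m n : ℕ) : SimpleGraph (Fin (m+1) × Fin (n+1)) where
  Adj u v := |(u.1 : ℤ) - (v.1 : ℤ)| + |(u.2 : ℤ) - (v.2 : ℤ)| = 1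
  symm := by
    constructor
    intro u v h
    rw [abs_sub_comm ((u.1 : ℤ)), abs_sub_comm ((u.2 : ℤ))] at h
    exact h
  loopless := by constructor; intro u h; simp at h

/-- The four corners of the square `s(i,j)`. -/
def squareCorners {m n : ℕ} (i : Fin m) (j : Fin n) :
    Finset (Fin (m+1) × Fin (n+1)) :=
  {(i.castSucc, j.castSucc), (i.succ, j.castSucc),
   (i.castSucc, j.succ), (i.succ, j.succ)}

/-- The four boundary edges of the square `s(i,j)`. -/
def squareEdges {m n : ℕ} (i : Fin m) (j : Fin n) :
    Finset (Sym2 (Fin (m+1) × Fin (n+1))) :=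
  { s((i.castSucc, j.castSucc), (i.succ, j.castSucc)),
    s((i.castSucc, j.succ), (i.succ, j.succ)),
    s((i.castSucc, j.castSucc), (i.castSucc, j.succ)),
    s((i.succ, j.castSucc), (i.succ, j.succ)) }

/-- The number of edges of the walk `W` lying on the boundary of square `s(i,j)`. -/
def cnt {m n : ℕ} {u v : Fin (m+1) × Fin (n+1)}
    (W : (gridGraph m n).Walk u v) (i : Fin m) (j : Fin n) : ℕ :=
  (W.edges.filter (fun e => e ∈ squareEdges i j)).length

/-!
The two boundary edges of `s(i,j)` on `W` are distinct, and on the 4-cycle bounding the square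
any two edges avoiding both endpoints of a third one coincide (they are its opposite edge).
If the extension `X` used a boundary edge, both its endpoints would be corners lying on `X`
beyond `v` (as `v` is not a corner), hence off the path `W`; then `W` could carry at most one
boundary edge.
-/

def fourCycleEdges {V : Type*} [DecidableEq V] (a b c d : V) : Finset (Sym2 V) :=
  {s(a, b), s(c, d), s(a, c), s(b, d)}

theorem eq_of_mem_fourCycleEdges_of_forall_notMem {V : Type*} [DecidableEq V] {a b c d : V}
    {e₀ e e' : Sym2 V} (h₀ : e₀ ∈ fourCycleEdges a b c d) (he : e ∈ fourCycleEdges a b c d)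
    (he' : e' ∈ fourCycleEdges a b c d) (hde : ∀ z ∈ e₀, z ∉ e) (hde' : ∀ z ∈ e₀, z ∉ e') :
    e = e' := by
  simp only [fourCycleEdges, Finset.mem_insert, Finset.mem_singleton] at h₀ he he'
  rcases h₀ with rfl | rfl | rfl | rfl <;> rcases he with rfl | rfl | rfl | rfl <;>
    rcases he' with rfl | rfl | rfl | rfl <;> simp only [Sym2.mem_iff] at hde hde' <;> grind

theorem squareEdges_eq_fourCycleEdges {m n : ℕ} (i : Fin m) (j : Fin n) :
    squareEdges i j = fourCycleEdges (i.castSucc, j.castSucc) (i.succ, j.castSucc)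
      (i.castSucc, j.succ) (i.succ, j.succ) :=
  rfl

theorem mem_squareCorners_of_mem_squareEdges {m n : ℕ} {i : Fin m} {j : Fin n}
    {e : Sym2 (Fin (m+1) × Fin (n+1))} (he : e ∈ squareEdges i j) {z : Fin (m+1) × Fin (n+1)}
    (hz : z ∈ e) : z ∈ squareCorners i j := by
  simp only [squareEdges, Finset.mem_insert, Finset.mem_singleton] at he
  rcases he with rfl | rfl | rfl | rfl <;> rw [Sym2.mem_iff] at hz <;>
    rcases hz with rfl | rfl <;> simp [squareCorners]

section

variable {m n : ℕ} {u v w : Fin (m+1) × Fin (n+1)} (i : Fin m) (j : Fin n)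

theorem cnt_append (W : (gridGraph m n).Walk u v) (X : (gridGraph m n).Walk v w) :
    cnt (W.append X) i j = cnt W i j + cnt X i j := by
  simp [cnt, Walk.edges_append, List.filter_append]

theorem cnt_le_one_of_forall_notMem_support {W : (gridGraph m n).Walk u v} (hW : W.IsPath)
    {e₀ : Sym2 (Fin (m+1) × Fin (n+1))} (he₀ : e₀ ∈ squareEdges i j)
    (havoid : ∀ z ∈ e₀, z ∉ W.support) : cnt W i j ≤ 1 := by
  set L := W.edges.filter (· ∈ squareEdges i j)
  have hL : L.Nodup := hW.edges_nodup.filter _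
  rw [cnt, ← List.toFinset_card_of_nodup hL, Finset.card_le_one]
  intro e he e' he'
  simp only [L, List.mem_toFinset, List.mem_filter, decide_eq_true_eq] at he he'
  rw [squareEdges_eq_fourCycleEdges] at he₀ he he'
  have avoids : ∀ f ∈ W.edges, ∀ z ∈ e₀, z ∉ f := fun f hf z hz hzf =>
    havoid z hz (Walk.mem_support_of_mem_edges hf hzf)
  exact eq_of_mem_fourCycleEdges_of_forall_notMem he₀ he.2 he'.2
    (avoids e he.1) (avoids e' he'.1)

end

/-- Row 3 of the learned predicate is sound: if a path `W` ends at a vertex that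
is not a corner of the square `s(i,j)` and contains exactly two boundary edges of
that square, then every path extending `W` contains exactly two boundary edges
of the square. -/
theorem row3_sound {m n : ℕ} {u v w : Fin (m+1) × Fin (n+1)}
    (i : Fin m) (j : Fin n)
    (W : (gridGraph m n).Walk u v) (hW : W.IsPath)
    (hv : v ∉ squareCorners i j) (hcnt : cnt W i j = 2)
    (W' : (gridGraph m n).Walk u w) (hW' : W'.IsPath)
    (hpre : ∃ X : (gridGraph m n).Walk v w, W' = W.append X) :
    cnt W' i j = 2 := by
  obtain ⟨X, rfl⟩ := hpre
  rw [cnt_append, hcnt]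
  suffices hX : cnt X i j = 0 by omega
  by_contra hX
  obtain ⟨e, heX, heS⟩ : ∃ e ∈ X.edges, e ∈ squareEdges i j := by
    simpa [cnt, List.filter_eq_nil_iff] using hX
  have havoid : ∀ z ∈ e, z ∉ W.support := fun z hz hzW =>
    hW'.ne_of_mem_support_of_append
      (fun hzv => hv (hzv ▸ mem_squareCorners_of_mem_squareEdges heS hz)) hzW
      (Walk.mem_support_of_mem_edges heX hz) rfl
  have := cnt_le_one_of_forall_notMem_support i j hW heS havoid
  omega
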